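/- arXiv:math/0703418 — 3 statements merged into one kernel-verified Lean document; each statement's English description precedes it below -/
import Mathlib

section
/- Let p be an odd prime and d ≥ 3 odd with d ≤ p+1. Then there exists a nonzero point a ∈ F_p^d with h_p(a) ≥ (d-1)p/2 + 1, and every nonzero point a ∈ F_p^d satisfies h_p(a) ≤ (dp-1)/2. -/
/-- The height of a tuple `a ∈ (ZMod p)^d`:
`min_{k=1}^{p-1} Σ_i (k·a_i mod p)`, using least nonnegative representatives. -/
noncomputable def heightP (p : ℕ) {d : ℕ} (a : Fin d → ZMod p) : ℕ :=
  sInf {n | ∃ k : ℕ, 1 ≤ k ∧ k ≤ p - 1 ∧ n = ∑ i, ((k : ZMod p) * a i).val}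

lemma sum_alt (x y : ℕ) (d : ℕ) :
    ∑ i ∈ Finset.range d, (if i % 2 = 0 then x else y) = (d+1)/2 * x + d/2 * y := by
  induction d with
  | zero => simp
  | succ n ih =>
    rw [Finset.sum_range_succ, ih]
    rcases Nat.even_or_odd n with ⟨m, rfl⟩ | ⟨m, rfl⟩
    · have h0 : (m + m) % 2 = 0 := by omega
      rw [if_pos h0]
      have h1 : (m + m + 1 + 1) / 2 = m + 1 := by omega
      have h2 : (m + m + 1) / 2 = m := by omega
      have h3 : (m + m) / 2 = m := by omega
      rw [h1, h2, h3]; ring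
    · have h0 : ¬ ((2 * m + 1) % 2 = 0) := by omega
      rw [if_neg h0]
      have h1 : (2 * m + 1 + 1 + 1) / 2 = m + 1 := by omega
      have h2 : (2 * m + 1 + 1) / 2 = m + 1 := by omega
      have h3 : (2 * m + 1) / 2 = m := by omega
      rw [h1, h2, h3]; ring

theorem stmt_3 (p d : ℕ) (hp : p.Prime) (hodd : Odd p) (hd3 : 3 ≤ d)
    (hdodd : Odd d) (hdp : d ≤ p + 1) :
    (∃ a : Fin d → ZMod p, a ≠ 0 ∧ (d - 1) * p / 2 + 1 ≤ heightP p a) ∧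
      (∀ a : Fin d → ZMod p, a ≠ 0 → heightP p a ≤ (d * p - 1) / 2) := by
  haveI : Fact p.Prime := ⟨hp⟩
  haveI : NeZero p := ⟨hp.pos.ne'⟩
  have hp3 : 3 ≤ p := by
    obtain ⟨r, hr⟩ := hodd
    have := hp.two_le
    omega
  obtain ⟨m, hm⟩ := hdodd
  constructor
  · -- existence
    set a : Fin d → ZMod p := fun i => if (i : ℕ) % 2 = 0 then 1 else -1 with ha
    have hSum : ∀ k : ℕ, 1 ≤ k → k ≤ p - 1 →
        ∑ i : Fin d, ((k : ZMod p) * a i).val = m * p + k := by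
      intro k hk1 hk2
      have hvk : ((k : ZMod p)).val = k := ZMod.val_natCast_of_lt (by omega)
      have hne : (k : ZMod p) ≠ 0 := by
        intro h; rw [h, ZMod.val_zero] at hvk; omega
      have hvnk : (-(k : ZMod p)).val = p - k := by
        rw [ZMod.neg_val, if_neg hne, hvk]
      have hterm : ∀ i : Fin d,
          ((k : ZMod p) * a i).val = if (i : ℕ) % 2 = 0 then k else p - k := by
        intro i
        by_cases h : (i : ℕ) % 2 = 0
        · simp [ha, h, hvk]
        · simp [ha, h, hvnk]
      rw [Finset.sum_congr rfl (fun i _ => hterm i)]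
      rw [Fin.sum_univ_eq_sum_range (fun i => if i % 2 = 0 then k else p - k) d]
      rw [sum_alt]
      have h1 : (d + 1) / 2 = m + 1 := by omega
      have h2 : d / 2 = m := by omega
      rw [h1, h2]
      have hk' : k + (p - k) = p := by omega
      calc (m+1) * k + m * (p - k) = m * (k + (p - k)) + k := by ring
        _ = m * p + k := by rw [hk']
    have hane : a ≠ 0 := by
      intro h0
      have := congrFun h0 ⟨0, by omega⟩
      simp [ha] at this
    refine ⟨a, hane, ?_⟩
    have hgoal : (d - 1) * p / 2 = m * p := by
      have : (d - 1) * p = 2 * (m * p) := by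
        rw [show d - 1 = 2 * m from by omega]; ring
      rw [this]; omega
    rw [hgoal, heightP]
    apply le_csInf
    · exact ⟨m * p + 1, 1, le_refl 1, by omega, (hSum 1 le_rfl (by omega)).symm⟩
    · rintro n ⟨k, hk1, hk2, rfl⟩
      rw [hSum k hk1 hk2]
      omega
  · -- upper bound
    intro a _
    have h1 : heightP p a ≤ ∑ i : Fin d, ((1 : ZMod p) * a i).val := by
      apply Nat.sInf_le
      exact ⟨1, le_rfl, by omega, by norm_num⟩
    have h2 : heightP p a ≤ ∑ i : Fin d, (((p - 1 : ℕ) : ZMod p) * a i).val := by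
      apply Nat.sInf_le
      exact ⟨p - 1, by omega, le_rfl, rfl⟩
    have hcast : ((p - 1 : ℕ) : ZMod p) = -1 := by
      have : ((p : ℕ) : ZMod p) = 0 := ZMod.natCast_self p
      push_cast [Nat.cast_sub (by omega : 1 ≤ p)]
      rw [ZMod.natCast_self]; ring
    have hsum : (∑ i : Fin d, ((1 : ZMod p) * a i).val)
        + (∑ i : Fin d, (((p - 1 : ℕ) : ZMod p) * a i).val) ≤ d * p := by
      rw [← Finset.sum_add_distrib]
      calc ∑ i : Fin d, (((1 : ZMod p) * a i).val + (((p - 1 : ℕ) : ZMod p) * a i).val)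
          ≤ ∑ _i : Fin d, p := by
            apply Finset.sum_le_sum
            intro i _
            rw [hcast, one_mul, neg_one_mul, ZMod.neg_val]
            have hlt := ZMod.val_lt (a i)
            split
            · omega
            · omega
        _ = d * p := by simp [Finset.sum_const, Finset.card_univ, mul_comm]
    have hoddpd : Odd (d * p) := (Odd.mul ⟨m, hm⟩ hodd)
    obtain ⟨t, ht⟩ := hoddpd
    have hh : heightP p a + heightP p a ≤ d * p := le_trans (add_le_add h1 h2) hsum
    omega
end

section
/- Let p be an odd prime with p ≥ 5 and a ∈ F_p*. Then h_p(1,a) = 3 if and only if a ≡ 2 (mod p) or a ≡ (p+1)/2 (mod p). -/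
/-!
Since `a` and `1 ≤ k ≤ p - 1` are units mod `p`, every term `k + (k·a mod p)` with `a ≠ 0` is at
least `k + 1`, so the value `3` can only come from `k = 1` with `a ≡ 2` or from `k = 2` with
`2a ≡ 1`. Conversely, when `a ∉ {0, 1}` the term for `k = 1` is at least `3`, so no term is
smaller than `3`; and `a ≡ 2` or `2a ≡ 1` excludes `a ∈ {0, 1}` once `p ≠ 2`.
-/

/-- The height `h_p(⟨1,a⟩) = min_{k=1}^{p-1} (k + (k·a mod p))`. -/
noncomputable def heightLine (p : ℕ) (a : ZMod p) : ℕ :=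
  sInf {n | ∃ k : ℕ, 1 ≤ k ∧ k ≤ p - 1 ∧ n = k + ((k : ZMod p) * a).val}

namespace ZMod

lemma val_eq_iff_eq_natCast {p n : ℕ} [NeZero p] (hn : n < p) (x : ZMod p) :
    x.val = n ↔ x = n := by
  constructor
  · rintro rfl
    exact (natCast_zmod_val x).symm
  · rintro rfl
    exact val_natCast_of_lt hn

lemma two_mul_natCast_half_succ {p : ℕ} (hodd : Odd p) :
    (2 : ZMod p) * (((p + 1) / 2 : ℕ) : ZMod p) = 1 := by
  obtain ⟨m, rfl⟩ := hodd
  have hm : (2 * m + 1 + 1) / 2 = m + 1 := by omega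
  have hp := natCast_self (2 * m + 1)
  rw [hm]
  push_cast at hp ⊢
  linear_combination hp

lemma val_natCast_mul_pos {p k : ℕ} [Fact p.Prime] {a : ZMod p} (ha : a ≠ 0) (hk1 : 1 ≤ k)
    (hk : k ≤ p - 1) : 0 < ((k : ZMod p) * a).val :=
  val_pos.mpr <| mul_ne_zero
    ((natCast_eq_zero_iff k p).not.mpr (Nat.not_dvd_of_pos_of_lt hk1 (by omega))) ha

end ZMod

section heightLine

variable {p k : ℕ} {a : ZMod p}

lemma heightLine_le (hk1 : 1 ≤ k) (hk : k ≤ p - 1) :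
    heightLine p a ≤ k + ((k : ZMod p) * a).val :=
  Nat.sInf_le ⟨k, hk1, hk, rfl⟩

lemma heightLine_le_one_add_val (hp : 1 < p) : heightLine p a ≤ 1 + a.val := by
  simpa using heightLine_le (a := a) le_rfl (by omega : 1 ≤ p - 1)

lemma exists_heightLine_eq (hp : 1 < p) :
    ∃ k, 1 ≤ k ∧ k ≤ p - 1 ∧ heightLine p a = k + ((k : ZMod p) * a).val :=
  Nat.sInf_mem (s := {n | ∃ k : ℕ, 1 ≤ k ∧ k ≤ p - 1 ∧ n = k + ((k : ZMod p) * a).val})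
    ⟨_, 1, le_rfl, by omega, rfl⟩

variable [Fact p.Prime]

lemma three_le_heightLine (ha0 : a ≠ 0) (ha1 : a ≠ 1) : 3 ≤ heightLine p a := by
  have hp := (Fact.out : p.Prime).one_lt
  obtain ⟨k, hk1, hk, hk3⟩ := exists_heightLine_eq (a := a) hp
  have hpos := ZMod.val_natCast_mul_pos ha0 hk1 hk
  rcases (show k = 1 ∨ 2 ≤ k by omega) with rfl | hk2
  · have hval1 : a.val ≠ 1 := fun h ↦ ha1 ((ZMod.val_eq_one hp a).mp h)
    rw [Nat.cast_one, one_mul] at hpos hk3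
    omega
  · omega

lemma eq_two_or_two_mul_eq_one_of_heightLine_eq_three (ha0 : a ≠ 0) (h : heightLine p a = 3) :
    a = 2 ∨ 2 * a = 1 := by
  have hp := (Fact.out : p.Prime).one_lt
  obtain ⟨k, hk1, hk, hk3⟩ := exists_heightLine_eq (a := a) hp
  have hpos := ZMod.val_natCast_mul_pos ha0 hk1 hk
  rcases (show k = 1 ∨ k = 2 by omega) with rfl | rfl
  · left
    have hval : a.val = 2 := by rw [Nat.cast_one, one_mul] at hk3; omega
    exact_mod_cast (ZMod.val_eq_iff_eq_natCast (hval ▸ a.val_lt) a).mp hval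
  · right
    have hval : ((2 : ℕ) * a : ZMod p).val = 1 := by omega
    exact_mod_cast (ZMod.val_eq_iff_eq_natCast hp _).mp hval

theorem heightLine_eq_three_iff (hp2 : p ≠ 2) : heightLine p a = 3 ↔ a = 2 ∨ 2 * a = 1 := by
  have hp3 : 2 < p := lt_of_le_of_ne (Fact.out : p.Prime).two_le (Ne.symm hp2)
  have htwo : (2 : ZMod p).val = 2 := by exact_mod_cast ZMod.val_natCast_of_lt hp3
  constructor
  · intro h
    have hval : 2 ≤ a.val := by have := heightLine_le_one_add_val (a := a) (by omega); omega
    exact eq_two_or_two_mul_eq_one_of_heightLine_eq_three (by rintro rfl; simp at hval) h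
  · have h20 : (2 : ZMod p) ≠ 0 := fun h ↦ by simp [h] at htwo
    have h21 : (2 : ZMod p) ≠ 1 := fun h ↦ by
      have := (ZMod.val_eq_one (by omega) _).mpr h
      omega
    rintro (rfl | h)
    · exact le_antisymm (by simpa [htwo] using heightLine_le_one_add_val (a := (2 : ZMod p)) (by omega))
        (three_le_heightLine h20 h21)
    · have ha0 : a ≠ 0 := by rintro rfl; simp at h
      have ha1 : a ≠ 1 := by rintro rfl; exact h21 (by rwa [mul_one] at h)
      refine le_antisymm ?_ (three_le_heightLine ha0 ha1)
      simpa [h, ZMod.val_one_eq_one_mod, Nat.mod_eq_of_lt (by omega : 1 < p)] using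
        heightLine_le (a := a) (k := 2) (by omega) (by omega)

end heightLine

theorem stmt_7_general (p : ℕ) (hp : p.Prime) (hodd : Odd p)
    (a : ZMod p) :
    heightLine p a = 3 ↔ a = 2 ∨ a = (((p + 1) / 2 : ℕ) : ZMod p) := by
  have := Fact.mk hp
  have hp2 : p ≠ 2 := by rintro rfl; exact absurd hodd (by decide)
  have hhalf := ZMod.two_mul_natCast_half_succ hodd
  rw [heightLine_eq_three_iff hp2]
  refine or_congr_right ⟨fun h ↦ left_inv_eq_right_inv (mul_comm a 2 ▸ h) hhalf, ?_⟩
  rintro rfl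
  exact hhalf

theorem stmt_7 (p : ℕ) (hp : p.Prime) (hodd : Odd p) (hp5 : 5 ≤ p)
    (a : ZMod p) (ha : a ≠ 0) :
    heightLine p a = 3 ↔ a = 2 ∨ a = (((p + 1) / 2 : ℕ) : ZMod p) :=
  stmt_7_general p hp hodd a
end

section
/- Let p ≥ 7 be prime and A = {a_1, a_2} ⊆ F_p* with a_1 ≠ a_2. Let G = (F_p, E_A) be the Cayley digraph. If G has no directed cycles of length 1, 2, or 3, then β(G) ≤ (p-1)/2, and moreover (p-1)/2 ≤ γ(G)/2 where γ(G) = p(p-5)/2 is the number of pairs of nonadjacent vertices. -/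
/-- A directed graph (given by its edge relation `E`) has a directed cycle. -/
def HasDirCycle {V : Type*} (E : V → V → Prop) : Prop :=
  ∃ (n : ℕ) (u : ℕ → V), 1 ≤ n ∧ (∀ j < n, E (u j) (u (j + 1))) ∧ u n = u 0

/-- A directed graph has a directed cycle of length at most 3 (a loop, digon,
or triangle). -/
def HasShortDirCycle {V : Type*} (E : V → V → Prop) : Prop :=
  ∃ (n : ℕ) (u : ℕ → V), 1 ≤ n ∧ n ≤ 3 ∧ (∀ j < n, E (u j) (u (j + 1))) ∧
    u n = u 0

/-- The edge set of the Cayley digraph of `A ⊆ ZMod p`. -/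
def cayleyEdges (p : ℕ) [Fact p.Prime] (A : Finset (ZMod p)) :
    Finset (ZMod p × ZMod p) :=
  (Finset.univ ×ˢ A).image fun q => (q.1, q.1 + q.2)

/-- `β(G)`: minimum number of edges whose deletion makes the digraph acyclic. -/
noncomputable def betaCayley (p : ℕ) [Fact p.Prime] (A : Finset (ZMod p)) : ℕ :=
  sInf {n | ∃ X ⊆ cayleyEdges p A, X.card = n ∧
    ¬ HasDirCycle (fun x y => (x, y) ∈ cayleyEdges p A \ X)}

/-!
Ordering the vertices by `x ↦ (T * x).val` for some `T ≠ 0`, the only edges `x → x + a` that go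
down are the `(T * a).val` wrap-around ones, so deleting them leaves an acyclic digraph and
`β ≤ (T * a₁).val + (T * a₂).val`. Triangle-freeness says that `r = a₂ / a₁` avoids `-1`, `-2` and
`-1/2`, and every other nonzero `r` is a quotient `k / j` of positive integers with
`2 (j + k) < p`; `T = j / a₁` then gives the bound.
-/

open Finset

lemma not_hasDirCycle_of_map_lt {V α : Type*} [Preorder α] (E : V → V → Prop) (φ : V → α)
    (hφ : ∀ x y, E x y → φ x < φ y) : ¬ HasDirCycle E := by
  rintro ⟨n, u, hn, hE, hcycle⟩
  have hincr : ∀ i, 1 ≤ i → i ≤ n → φ (u 0) < φ (u i) := by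
    intro i hi
    induction i, hi using Nat.le_induction with
    | base => exact fun _ => hφ _ _ (hE 0 (by omega))
    | succ i _ ih => exact fun hin => (ih (by omega)).trans (hφ _ _ (hE i (by omega)))
  exact lt_irrefl _ (hcycle ▸ hincr n hn le_rfl)

lemma ZMod.card_filter_val_add_le_val {n : ℕ} [NeZero n] (c : ZMod n) (hc : c ≠ 0) :
    #{y : ZMod n | (y + c).val ≤ y.val} ≤ c.val := by
  have hc_pos : 0 < c.val := Nat.pos_of_ne_zero ((ZMod.val_ne_zero c).2 hc)
  calc #{y : ZMod n | (y + c).val ≤ y.val} ≤ #(Ico (n - c.val) n) := by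
        refine card_le_card_of_injOn ZMod.val (fun y hy => ?_) (ZMod.val_injective n).injOn
        have hwrap : n ≤ y.val + c.val := by
          by_contra! h
          have := (mem_filter.mp hy).2
          rw [ZMod.val_add_of_lt h] at this
          omega
        simp only [coe_Ico, Set.mem_Ico]
        exact ⟨by omega, ZMod.val_lt y⟩
    _ = c.val := by rw [Nat.card_Ico]; have := ZMod.val_lt c; omega

section CayleyDigraph

variable {p : ℕ} [Fact p.Prime] {A : Finset (ZMod p)}

lemma mem_cayleyEdges {x y : ZMod p} : (x, y) ∈ cayleyEdges p A ↔ y - x ∈ A := by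
  simp only [cayleyEdges, mem_image, mem_product, mem_univ, true_and, Prod.mk.injEq,
    Prod.exists]
  constructor
  · rintro ⟨x, a, ha, rfl, rfl⟩
    simpa using ha
  · exact fun h => ⟨x, y - x, h, rfl, by ring⟩

lemma hasShortDirCycle_of_sum_eq_zero (s : ℕ → ZMod p) {n : ℕ} (hn1 : 1 ≤ n) (hn3 : n ≤ 3)
    (hs : ∀ k < n, s k ∈ A) (hsum : ∑ k ∈ range n, s k = 0) :
    HasShortDirCycle fun x y => (x, y) ∈ cayleyEdges p A :=
  ⟨n, fun i => ∑ k ∈ range i, s k, hn1, hn3,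
    fun j hj => by simpa [mem_cayleyEdges, sum_range_succ] using hs j hj, by simpa using hsum⟩

lemma betaCayley_le_card {X : Finset (ZMod p × ZMod p)} (hX : X ⊆ cayleyEdges p A)
    (hacyc : ¬ HasDirCycle fun x y => (x, y) ∈ cayleyEdges p A \ X) : betaCayley p A ≤ #X :=
  Nat.sInf_le ⟨X, hX, rfl, hacyc⟩

lemma card_filter_val_mul_add_le {T c : ZMod p} (hT : T ≠ 0) (hc : c ≠ 0) :
    #{x | (T * (x + c)).val ≤ (T * x).val} ≤ (T * c).val :=
  (card_le_card_of_injOn (T * ·) (fun x hx => by simpa [mul_add] using hx)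
    (mul_right_injective₀ hT).injOn).trans
    (ZMod.card_filter_val_add_le_val _ (mul_ne_zero hT hc))

theorem betaCayley_le_sum_val_mul {T : ZMod p} (hT : T ≠ 0) (hA : 0 ∉ A) :
    betaCayley p A ≤ ∑ a ∈ A, (T * a).val := by
  set X := {e ∈ cayleyEdges p A | (T * e.2).val ≤ (T * e.1).val}
  have hacyc : ¬ HasDirCycle fun x y => (x, y) ∈ cayleyEdges p A \ X :=
    not_hasDirCycle_of_map_lt _ (fun x => (T * x).val) fun x y hxy => by
      simp only [X, mem_sdiff, mem_filter, not_and, not_le] at hxy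
      exact hxy.2 hxy.1
  have hcover : X ⊆ A.biUnion fun a =>
      ({x | (T * (x + a)).val ≤ (T * x).val} : Finset (ZMod p)).image fun x => (x, x + a) := by
    rintro ⟨x, y⟩ he
    simp only [X, mem_filter, mem_cayleyEdges] at he
    simp only [mem_biUnion, mem_image, mem_filter, mem_univ, true_and, Prod.mk.injEq]
    exact ⟨y - x, he.1, x, by simpa using he.2, rfl, by ring⟩
  calc betaCayley p A ≤ #X := betaCayley_le_card (filter_subset _ _) hacyc
    _ ≤ _ := (card_le_card hcover).trans card_biUnion_le
    _ ≤ _ := sum_le_sum fun a ha =>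
      card_image_le.trans (card_filter_val_mul_add_le hT (ne_of_mem_of_not_mem ha hA))

lemma add_ne_zero_of_not_hasShortDirCycle_pair {a₁ a₂ : ZMod p}
    (htf : ¬ HasShortDirCycle fun x y => (x, y) ∈ cayleyEdges p {a₁, a₂}) :
    a₁ + a₂ ≠ 0 ∧ 2 * a₁ + a₂ ≠ 0 ∧ a₁ + 2 * a₂ ≠ 0 := by
  have hcycle : ∀ b c : ZMod p, ∀ n, 2 ≤ n → n ≤ 3 → ∑ k ∈ range n, (if k = 0 then b else c) = 0 →
      HasShortDirCycle fun x y => (x, y) ∈ cayleyEdges p {b, c} := fun b c n h2 h3 hsum =>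
    hasShortDirCycle_of_sum_eq_zero _ (by omega) h3
      (fun k _ => by split_ifs <;> simp) hsum
  refine ⟨fun h => htf (hcycle a₁ a₂ 2 le_rfl (by norm_num) ?_),
    fun h => htf (?_ : HasShortDirCycle _), fun h => htf (hcycle a₁ a₂ 3 (by norm_num) le_rfl ?_)⟩
  · simpa [sum_range_succ] using h
  · rw [pair_comm]
    exact hcycle a₂ a₁ 3 (by norm_num) le_rfl (by simp [sum_range_succ]; linear_combination h)
  · simp [sum_range_succ]; linear_combination h

end CayleyDigraph

lemma Nat.Prime.exists_lt_two_mul_mul_and_mul_add_one_lt {p v : ℕ} (hp : p.Prime) (hv : 2 ≤ v) (hvp : 2 * v + 3 ≤ p) :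
    ∃ j, p < 2 * j * v ∧ j * (v + 1) < p := by
  have hodd : p % 2 = 1 := Nat.odd_iff.mp (hp.odd_of_ne_two (by omega))
  have h9 : p ≠ 9 := by rintro rfl; norm_num at hp
  obtain ⟨q, m, hdiv, hm, hm_odd⟩ : ∃ q m, 2 * v * q + m = p ∧ m < 2 * v ∧ m % 2 = 1 :=
    ⟨p / (2 * v), p % (2 * v), Nat.div_add_mod p (2 * v), Nat.mod_lt _ (by omega),
      by rw [Nat.mod_mul_right_mod]; exact hodd⟩
  have hm1 : 1 ≤ m := by omega
  have hq0 : q ≠ 0 := by rintro rfl; omega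
  -- `q + 1` is the least `j` with `p < 2 * j * v`; for `v = 2` it fails exactly when `p = 9`.
  refine ⟨q + 1, by nlinarith, ?_⟩
  rcases Nat.lt_or_ge q 2 with hq2 | hq2
  · obtain rfl : q = 1 := by omega
    nlinarith
  rcases Nat.lt_or_ge v 3 with hv3 | hv3
  · obtain rfl : v = 2 := by omega
    omega
  · obtain ⟨q, rfl⟩ : ∃ q', q = q' + 2 := ⟨q - 2, by omega⟩
    obtain ⟨v, rfl⟩ : ∃ v', v = v' + 3 := ⟨v - 3, by omega⟩
    nlinarith

lemma ZMod.exists_small_natCast_eq_natCast_mul {p : ℕ} [Fact p.Prime] {r : ZMod p} (h0 : r ≠ 0)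
    (h1 : r + 1 ≠ 0) (h2 : r + 2 ≠ 0) (h3 : 2 * r + 1 ≠ 0) :
    ∃ j k : ℕ, 0 < j ∧ 0 < k ∧ 2 * (j + k) < p ∧ (k : ZMod p) = j * r := by
  have hp : p.Prime := Fact.out
  set s := r.val
  have hs : (s : ZMod p) = r := ZMod.natCast_zmod_val r
  have hsp : s < p := ZMod.val_lt r
  have hne : ∀ m : ℕ, (m : ZMod p) ≠ 0 → m ≠ p := fun m hm h => hm (h ▸ ZMod.natCast_self p)
  have hs0 : s ≠ 0 := (ZMod.val_ne_zero r).2 h0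
  have hs1 : s + 1 ≠ p := hne _ (by push_cast [hs]; exact h1)
  have hs2 : s + 2 ≠ p := hne _ (by push_cast [hs]; exact h2)
  have hs3 : 2 * s + 1 ≠ p := hne _ (by push_cast [hs]; exact h3)
  have hparity : p = 2 ∨ p % 2 = 1 := hp.eq_two_or_odd
  by_cases hsmall : 2 * (1 + s) < p
  · exact ⟨1, s, one_pos, by omega, hsmall, by rw [hs, Nat.cast_one, one_mul]⟩
  obtain ⟨v, hvs⟩ : ∃ v, v + 1 = p - s := ⟨p - s - 1, by omega⟩
  obtain ⟨j, hj, hjp⟩ := hp.exists_lt_two_mul_mul_and_mul_add_one_lt (v := v) (by omega) (by omega)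
  have hv : ((v + 1 : ℕ) : ZMod p) = -r := by
    rw [hvs, Nat.cast_sub hsp.le, ZMod.natCast_self, hs, zero_sub]
  have hexp : j * (v + 1) = j * v + j := by ring
  have hexp' : 2 * j * v = 2 * (j * v) := by ring
  refine ⟨j, p - j * (v + 1), by nlinarith, by omega, by omega, ?_⟩
  rw [Nat.cast_sub hjp.le, ZMod.natCast_self, Nat.cast_mul, hv]
  ring

lemma exists_val_mul_add_val_mul_lt {p : ℕ} [Fact p.Prime] {a₁ a₂ : ZMod p} (h1 : a₁ ≠ 0)
    (h2 : a₂ ≠ 0) (h12 : a₁ + a₂ ≠ 0) (h112 : 2 * a₁ + a₂ ≠ 0) (h122 : a₁ + 2 * a₂ ≠ 0) :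
    ∃ T : ZMod p, T ≠ 0 ∧ 2 * ((T * a₁).val + (T * a₂).val) < p := by
  have hr : ∀ c d : ZMod p, c * a₁ + d * a₂ ≠ 0 → d * (a₂ / a₁) + c ≠ 0 := by
    intro c d hcd h
    field_simp at h
    exact hcd (by linear_combination h)
  obtain ⟨j, k, hj, hk, hjk, hkj⟩ := ZMod.exists_small_natCast_eq_natCast_mul (div_ne_zero h2 h1)
    (by simpa using hr 1 1 (by simpa using h12)) (by simpa using hr 2 1 (by simpa using h112))
    (by simpa using hr 1 2 (by simpa using h122))
  have hjval : (j : ZMod p).val = j := ZMod.val_cast_of_lt (by omega)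
  have hkval : (k : ZMod p).val = k := ZMod.val_cast_of_lt (by omega)
  have hj0 : (j : ZMod p) ≠ 0 := fun h => by rw [h, ZMod.val_zero] at hjval; omega
  refine ⟨j / a₁, div_ne_zero hj0 h1, ?_⟩
  rw [div_mul_cancel₀ _ h1, div_mul_eq_mul_div, mul_div_assoc, ← hkj, hjval, hkval]
  exact hjk

theorem stmt_18_general (p : ℕ) [Fact p.Prime] (hp7 : 7 ≤ p) (a₁ a₂ : ZMod p)
    (h1 : a₁ ≠ 0) (h2 : a₂ ≠ 0)
    (htf : ¬ HasShortDirCycle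
      (fun x y => (x, y) ∈ cayleyEdges p ({a₁, a₂} : Finset (ZMod p)))) :
    betaCayley p ({a₁, a₂} : Finset (ZMod p)) ≤ (p - 1) / 2 ∧
      ((p : ℚ) - 1) / 2 ≤ (p * (p - 5) / 2) / 2 := by
  obtain ⟨h12, h112, h122⟩ := add_ne_zero_of_not_hasShortDirCycle_pair htf
  obtain ⟨T, hT, hsmall⟩ := exists_val_mul_add_val_mul_lt h1 h2 h12 h112 h122
  have h0 : (0 : ZMod p) ∉ ({a₁, a₂} : Finset (ZMod p)) := by simp [h1.symm, h2.symm]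
  refine ⟨?_, ?_⟩
  · calc betaCayley p {a₁, a₂} ≤ ∑ a ∈ {a₁, a₂}, (T * a).val := betaCayley_le_sum_val_mul hT h0
      _ ≤ (T * a₁).val + (T * a₂).val := by
        rcases eq_or_ne a₁ a₂ with rfl | hne
        · simp
        · rw [sum_pair hne]
      _ ≤ (p - 1) / 2 := by omega
  · have hp7' : (7 : ℚ) ≤ p := by exact_mod_cast hp7
    nlinarith

theorem stmt_18 (p : ℕ) [Fact p.Prime] (hp7 : 7 ≤ p) (a₁ a₂ : ZMod p)
    (h1 : a₁ ≠ 0) (h2 : a₂ ≠ 0) (hne : a₁ ≠ a₂)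
    (htf : ¬ HasShortDirCycle
      (fun x y => (x, y) ∈ cayleyEdges p ({a₁, a₂} : Finset (ZMod p)))) :
    betaCayley p ({a₁, a₂} : Finset (ZMod p)) ≤ (p - 1) / 2 ∧
      ((p : ℚ) - 1) / 2 ≤ (p * (p - 5) / 2) / 2 :=
  stmt_18_general p hp7 a₁ a₂ h1 h2 htf
end
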